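/- Fix $t, a, b > 0$ and let $f(\xi) = 1$ for $\xi < 0$ and $f(\xi) = 0$ for $\xi \geq 0$. For $N \in \mathbb{N}$, set $J_N = \lceil (N-1)b/(a+b) \rceil$, and define $x_j = a + t$ and $\sigma_j = 1$ for $1 \leq j \leq J_N$, and $x_j = -b$ and $\sigma_j = 0$ for $J_N < j \leq N$. Then for every $i \in \{1,\ldots,N\}$, $\sigma_i = f\left(\frac{1}{N-1}\sum_{j \neq i}(x_j - \sigma_j t)\right)$; in other words, this mixed configuration is an $N$-player Nash equilibrium. -/

import Mathlib

/-- The mixed configuration (`σ_j = 1, x_j = a+t` for `j ≤ J_N`; `σ_j = 0, x_j = -b` for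
`j > J_N`, with `J_N = ⌈(N-1)b/(a+b)⌉`) is an `N`-player Nash equilibrium for the game with
`f(ξ) = 1` for `ξ < 0`, `f(ξ) = 0` for `ξ ≥ 0`. -/
theorem stmt11 (t a b : ℝ) (ht : 0 < t) (ha : 0 < a) (hb : 0 < b)
    (f : ℝ → ℝ) (hf : ∀ ξ : ℝ, f ξ = if ξ < 0 then 1 else 0)
    (N J : ℕ) (hJ : J = ⌈((N : ℝ) - 1) * b / (a + b)⌉₊)
    (x σ : ℕ → ℝ)
    (hx : ∀ j, 1 ≤ j → j ≤ N → x j = if j ≤ J then a + t else -b)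
    (hσ : ∀ j, 1 ≤ j → j ≤ N → σ j = if j ≤ J then 1 else 0) :
    ∀ i ∈ Finset.Icc 1 N,
      σ i = f ((1 / ((N : ℝ) - 1)) * ∑ j ∈ (Finset.Icc 1 N).erase i, (x j - σ j * t)) := by
  intro i hi
  rw [Finset.mem_Icc] at hi
  obtain ⟨hi1, hiN⟩ := hi
  have hab : (0:ℝ) < a + b := by linarith
  have hN1 : 1 ≤ N := le_trans hi1 hiN
  rcases eq_or_lt_of_le hN1 with hN | hN2
  · -- N = 1
    have hN : N = 1 := hN.symm
    subst hN
    have hie : i = 1 := le_antisymm hiN hi1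
    subst hie
    have hJ0 : J = 0 := by rw [hJ]; norm_num
    have hE : (Finset.Icc 1 1).erase 1 = ∅ := by decide
    rw [hE]
    rw [hσ 1 le_rfl le_rfl, hJ0, hf]
    norm_num
  · -- N ≥ 2
    have hNR : (2:ℝ) ≤ (N:ℝ) := by exact_mod_cast hN2
    have hyn : 0 ≤ ((N:ℝ) - 1) * b / (a + b) := by apply div_nonneg _ hab.le; nlinarith
    have hJle : J ≤ N - 1 := by
      rw [hJ]
      apply Nat.ceil_le.mpr
      have hc : ((N - 1:ℕ):ℝ) = (N:ℝ) - 1 := by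
        rw [Nat.cast_sub hN1]; norm_num
      rw [hc, div_le_iff₀ hab]
      nlinarith
    have hJN : J ≤ N := le_trans hJle (Nat.sub_le _ _)
    have hmem : i ∈ Finset.Icc 1 N := Finset.mem_Icc.mpr ⟨hi1, hiN⟩
    have hsum : ∀ j ∈ (Finset.Icc 1 N), x j - σ j * t = if j ≤ J then a else (-b) := by
      intro j hj
      rw [Finset.mem_Icc] at hj
      rw [hx j hj.1 hj.2, hσ j hj.1 hj.2]
      split_ifs <;> ring
    have hrw : ∑ j ∈ (Finset.Icc 1 N).erase i, (x j - σ j * t)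
        = (∑ j ∈ Finset.Icc 1 N, (if j ≤ J then a else (-b))) - (if i ≤ J then a else (-b)) := by
      rw [← Finset.sum_erase_eq_sub hmem]
      exact Finset.sum_congr rfl (fun j hj => hsum j (Finset.mem_of_mem_erase hj))
    have hfilter1 : (Finset.Icc 1 N).filter (fun j => j ≤ J) = Finset.Icc 1 J := by
      ext j
      simp only [Finset.mem_filter, Finset.mem_Icc]
      omega
    have hfilter2 : (Finset.Icc 1 N).filter (fun j => ¬ j ≤ J) = Finset.Icc (J+1) N := by
      ext j
      simp only [Finset.mem_filter, Finset.mem_Icc]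
      omega
    have htot : (∑ j ∈ Finset.Icc 1 N, (if j ≤ J then a else (-b)))
        = (J:ℝ) * a - ((N:ℝ) - (J:ℝ)) * b := by
      rw [Finset.sum_ite, hfilter1, hfilter2, Finset.sum_const, Finset.sum_const,
        Nat.card_Icc, Nat.card_Icc]
      have h1 : J + 1 - 1 = J := by omega
      have h2 : ((N + 1 - (J+1) : ℕ):ℝ) = (N:ℝ) - (J:ℝ) := by
        have : N + 1 - (J+1) = N - J := by omega
        rw [this, Nat.cast_sub hJN]
      rw [h1, nsmul_eq_mul, nsmul_eq_mul, h2]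
      ring
    rw [hrw, htot, hσ i hi1 hiN, hf]
    have hJleR : (J:ℝ) ≤ (N:ℝ) - 1 := by
      have : ((N-1:ℕ):ℝ) = (N:ℝ) - 1 := by rw [Nat.cast_sub hN1]; norm_num
      rw [← this]; exact_mod_cast hJle
    have hNpos : (0:ℝ) < 1 / ((N:ℝ) - 1) := by
      apply div_pos one_pos; linarith
    by_cases hiJ : i ≤ J
    · rw [if_pos hiJ, if_pos hiJ]
      -- show inner < 0
      have hJceil : (J:ℝ) < ((N:ℝ) - 1) * b / (a + b) + 1 := by
        rw [hJ]; exact Nat.ceil_lt_add_one hyn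
      have hkey : ((J:ℝ) - 1) * (a + b) < ((N:ℝ) - 1) * b := by
        rw [← lt_div_iff₀ hab]; linarith
      have hinner : (J:ℝ) * a - ((N:ℝ) - (J:ℝ)) * b - a < 0 := by nlinarith
      rw [if_pos (mul_neg_of_pos_of_neg hNpos hinner)]
    · rw [if_neg hiJ, if_neg hiJ]
      have hJceil : ((N:ℝ) - 1) * b / (a + b) ≤ (J:ℝ) := by
        rw [hJ]; exact Nat.le_ceil _
      have hkey : ((N:ℝ) - 1) * b ≤ (J:ℝ) * (a + b) := by
        rw [← div_le_iff₀ hab]; linarith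
      have hinner : (0:ℝ) ≤ (J:ℝ) * a - ((N:ℝ) - (J:ℝ)) * b - (-b) := by nlinarith
      rw [if_neg (not_lt.mpr (mul_nonneg hNpos.le hinner))]
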